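/- arXiv:2412.09325 — 3 statements merged into one kernel-verified Lean document; each statement's English description precedes it below -/
import Mathlib

section
/- If Var[β̂ | D_o]/β² > κ_x²(1−κ_x)/(κ_x+1) for all κ_x ∈ (0,1) — which holds whenever Var[β̂|D_o]/β² > 0.09017 — then for every κ_x ∈ (0,1) the quantity (κ_x − 1)(κ_x³ − κ_x² + v κ_x + v) is negative, where v = Var[β̂|D_o]/β², i.e., the uncorrected estimator has smaller mean square error. -/
/-- If `v = Var[β̂|D_o]/β²` satisfies `v > κ²(1−κ)/(κ+1)` for all `κ ∈ (0,1)`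
(which holds whenever `v > 0.09017`), then for every `κ ∈ (0,1)` the MSE
difference factor `(κ−1)(κ³−κ²+vκ+v)` is negative, i.e. the uncorrected
estimator has smaller mean square error. -/
theorem uncorrected_better_when_variance_ratio_large
    (v : ℝ) (hv : 0 < v) :
    ((∀ κ ∈ Set.Ioo (0 : ℝ) 1, κ ^ 2 * (1 - κ) / (κ + 1) < v) →
      ∀ κ ∈ Set.Ioo (0 : ℝ) 1,
        (κ - 1) * (κ ^ 3 - κ ^ 2 + v * κ + v) < 0) ∧
    (0.09017 < v → ∀ κ ∈ Set.Ioo (0 : ℝ) 1, κ ^ 2 * (1 - κ) / (κ + 1) < v) := by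
  constructor
  · intro h κ hκ
    obtain ⟨h0, h1⟩ := hκ
    have hκ1 : (0:ℝ) < κ + 1 := by linarith
    have := h κ ⟨h0, h1⟩
    rw [div_lt_iff₀ hκ1] at this
    have hpos : 0 < κ ^ 3 - κ ^ 2 + v * κ + v := by nlinarith
    nlinarith
  · intro hv09 κ hκ
    obtain ⟨h0, h1⟩ := hκ
    have hκ1 : (0:ℝ) < κ + 1 := by linarith
    rw [div_lt_iff₀ hκ1]
    nlinarith [mul_nonneg (sq_nonneg (κ - 0.618034)) (by linarith : (0:ℝ) ≤ κ + 0.236068), h0.le]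
end

section
/- Let F = PΛP⁻¹ with Λ = diag(λ₁,…,λ_k) and all λ_i + λ_j ≠ 0. Then ∫₀ᵗ e^{Fv} Ψ e^{Fᵀv} dv = P ( M ∘ (P⁻¹ Ψ P⁻ᵀ) ) Pᵀ, where M_{ij} = (e^{t(λ_i+λ_j)} − 1)/(λ_i + λ_j) and ∘ denotes the Hadamard (entrywise) product. -/
/-!
Conjugating by `P` diagonalizes the flow: `e^{vF} = P e^{vΛ} P⁻¹`, so
`e^{vF} Ψ e^{vFᵀ} = P (e^{vΛ} C e^{vΛ}) Pᵀ` with `C = P⁻¹ Ψ P⁻ᵀ`, and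
`e^{vΛ} C e^{vΛ}` is the Hadamard product of `C` with `(e^{v(λᵢ+λⱼ)})ᵢⱼ`.
Integration commutes with the outer linear maps `X ↦ P X Pᵀ` and `X ↦ X ⊙ C`,
leaving the scalar integrals `∫₀ᵗ e^{vc} dv = (e^{tc} - 1)/c`.
-/

open Matrix NormedSpace

theorem integral_exp_mul_const {c : ℝ} (hc : c ≠ 0) (a b : ℝ) :
    ∫ x in a..b, Real.exp (x * c) = (Real.exp (b * c) - Real.exp (a * c)) / c := by
  rw [intervalIntegral.integral_comp_mul_right (fun x => Real.exp x) hc, integral_exp,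
    inv_smul_eq_iff₀ hc, smul_eq_mul, mul_div_cancel₀ _ hc]

namespace Matrix

variable {m n o p α : Type*}

theorem diagonal_mul_mul_diagonal [Fintype m] [DecidableEq m] [Fintype n] [DecidableEq n]
    [CommSemiring α] (d : m → α) (A : Matrix m n α) (e : n → α) :
    diagonal d * A * diagonal e = vecMulVec d e ⊙ A := by
  ext i j
  simp only [mul_diagonal, diagonal_mul, hadamard_apply, vecMulVec_apply]
  ring

theorem exp_smul_conj_diagonal [Fintype n] [DecidableEq n] {P : Matrix n n ℝ} (hP : IsUnit P)
    (d : n → ℝ) (v : ℝ) :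
    exp (v • (P * diagonal d * P⁻¹)) = P * diagonal (fun a => Real.exp (v * d a)) * P⁻¹ := by
  rw [← Matrix.smul_mul, ← Matrix.mul_smul, ← diagonal_smul, Matrix.exp_conj _ _ hP,
    Matrix.exp_diagonal, Pi.exp_def, ← Real.exp_eq_exp_ℝ]
  rfl

theorem exp_smul_conj_diagonal_mul_mul_transpose [Fintype n] [DecidableEq n]
    {P : Matrix n n ℝ} (hP : IsUnit P) (d : n → ℝ) (Ψ : Matrix n n ℝ) (v : ℝ) :
    exp (v • (P * diagonal d * P⁻¹)) * Ψ * exp (v • (P * diagonal d * P⁻¹)ᵀ) =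
      P * (of (fun a b => Real.exp (v * (d a + d b))) ⊙ (P⁻¹ * Ψ * P⁻¹ᵀ)) * Pᵀ := by
  have hexp : of (fun a b => Real.exp (v * (d a + d b))) =
      vecMulVec (fun a => Real.exp (v * d a)) (fun b => Real.exp (v * d b)) := by
    ext a b
    rw [of_apply, vecMulVec_apply, mul_add, Real.exp_add]
  rw [← transpose_smul, exp_transpose, exp_smul_conj_diagonal hP, hexp,
    ← diagonal_mul_mul_diagonal]
  simp only [transpose_mul, diagonal_transpose, Matrix.mul_assoc]

theorem intervalIntegral_mul_mul_apply [Fintype n] [Fintype o] {a b : ℝ} (P : Matrix m n ℝ)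
    (A : ℝ → Matrix n o ℝ) (Q : Matrix o p ℝ)
    (hA : ∀ k l, IntervalIntegrable (fun v => A v k l) MeasureTheory.volume a b) (i : m) (j : p) :
    ∫ v in a..b, (P * A v * Q) i j = (P * of (fun k l => ∫ v in a..b, A v k l) * Q) i j := by
  have hterm : ∀ k l, IntervalIntegrable (fun v => P i k * A v k l * Q l j)
      MeasureTheory.volume a b := fun k l => ((hA k l).const_mul _).mul_const _
  simp only [mul_apply, of_apply, Finset.sum_mul]
  rw [intervalIntegral.integral_finsetSum fun l _ => by
    simpa only [Finset.sum_fn] using IntervalIntegrable.sum _ fun k _ => hterm k l]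
  refine Finset.sum_congr rfl fun l _ => ?_
  rw [intervalIntegral.integral_finsetSum fun k _ => hterm k l]
  refine Finset.sum_congr rfl fun k _ => ?_
  rw [intervalIntegral.integral_mul_const, intervalIntegral.integral_const_mul]

end Matrix

open Matrix NormedSpace in
/-- If `F = PΛP⁻¹` with `Λ = diag(λ)` and `λᵢ + λⱼ ≠ 0` for all `i, j`, then
`∫₀ᵗ e^{Fv} Ψ e^{Fᵀv} dv = P (M ⊙ (P⁻¹ Ψ P⁻ᵀ)) Pᵀ`, where
`Mᵢⱼ = (e^{t(λᵢ+λⱼ)} − 1)/(λᵢ + λⱼ)` and `⊙` is the Hadamard product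
(the integral being taken entrywise). -/
theorem integral_exp_sandwich_eigendecomposition
    {k : ℕ} (F P Ψ : Matrix (Fin k) (Fin k) ℝ) (lam : Fin k → ℝ)
    (hP : IsUnit P)
    (hF : F = P * diagonal lam * P⁻¹)
    (hlam : ∀ i j, lam i + lam j ≠ 0) (t : ℝ) :
    ∀ i j,
      (∫ v in (0 : ℝ)..t, (exp (v • F) * Ψ * exp (v • Fᵀ)) i j) =
      (P * (Matrix.hadamard
          (Matrix.of fun i' j' =>
            (Real.exp (t * (lam i' + lam j')) - 1) / (lam i' + lam j'))
          (P⁻¹ * Ψ * (P⁻¹)ᵀ)) * Pᵀ) i j := by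
  intro i j
  subst hF
  simp_rw [exp_smul_conj_diagonal_mul_mul_transpose hP]
  rw [intervalIntegral_mul_mul_apply _ _ _ fun a b =>
    (by simp only [hadamard_apply, of_apply]; fun_prop : Continuous _).intervalIntegrable _ _]
  refine congrArg (fun X : Matrix (Fin k) (Fin k) ℝ => (P * X * Pᵀ) i j) (ext fun a b => ?_)
  simp only [of_apply, hadamard_apply, intervalIntegral.integral_mul_const,
    integral_exp_mul_const (hlam a b), zero_mul, Real.exp_zero]
end

section
/- In the scalar OUBM model with α > 0 and some b_l ≠ 0, Var[y(t)] → ∞ linearly in t as t → ∞ (specifically Var[y(t)]/t → Σ_l σ_{x_l}² b_l² > 0), so no stationary distribution exists; however if all b_l = 0, Var[y(t)] → σ_y²/(2α). -/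
open Filter in
lemma oubm_exp_neg_tendsto {c : ℝ} (hc : 0 < c) :
    Tendsto (fun t : ℝ => Real.exp (-c * t)) atTop (nhds 0) := by
  have hct : Tendsto (fun t : ℝ => c * t) atTop atTop :=
    Tendsto.const_mul_atTop hc tendsto_id
  have h := Real.tendsto_exp_neg_atTop_nhds_zero.comp hct
  simpa [Function.comp_def, neg_mul] using h

open Filter in
/-- Scalar OUBM model with `α > 0`: if some `b_l ≠ 0` then `Var[y(t)] → ∞`
linearly in `t` (`Var[y(t)]/t → Σ_l σ_{x_l}²b_l² > 0` and `Var[y(t)] → ∞`), so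
no stationary distribution exists; if all `b_l = 0` then
`Var[y(t)] → σ_y²/(2α)`. -/
theorem oubm_variance_asymptotics
    {kx : ℕ} (α σy : ℝ) (σx b : Fin kx → ℝ) (hα : 0 < α) (hσy : 0 < σy)
    (hσx : ∀ l, 0 < σx l)
    (Vy : ℝ → ℝ)
    (hVy : ∀ t, Vy t =
      (1 - Real.exp (-2 * α * t)) / (2 * α) * σy ^ 2 +
        (t + (1 - Real.exp (-2 * α * t)) / (2 * α) -
          2 / α * (1 - Real.exp (-α * t))) * ∑ l, σx l ^ 2 * b l ^ 2) :
    ((∃ l, b l ≠ 0) →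
      (0 < ∑ l, σx l ^ 2 * b l ^ 2) ∧
      Tendsto (fun t => Vy t / t) atTop (nhds (∑ l, σx l ^ 2 * b l ^ 2)) ∧
      Tendsto Vy atTop atTop) ∧
    ((∀ l, b l = 0) → Tendsto Vy atTop (nhds (σy ^ 2 / (2 * α)))) := by
  set S : ℝ := ∑ l, σx l ^ 2 * b l ^ 2 with hS
  have h2α : (0:ℝ) < 2 * α := by linarith
  have he2 : Tendsto (fun t : ℝ => Real.exp (-2 * α * t)) atTop (nhds 0) := by
    have := oubm_exp_neg_tendsto h2α
    simpa [mul_assoc, neg_mul] using this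
  have he1 : Tendsto (fun t : ℝ => Real.exp (-α * t)) atTop (nhds 0) :=
    oubm_exp_neg_tendsto hα
  -- A t : the σy² part ; g t : bounded part of the BM coefficient
  have hA : Tendsto (fun t : ℝ => (1 - Real.exp (-2 * α * t)) / (2 * α) * σy ^ 2)
      atTop (nhds ((1 - 0) / (2 * α) * σy ^ 2)) :=
    (((tendsto_const_nhds.sub he2).div_const _).mul_const _)
  have hg : Tendsto
      (fun t : ℝ => (1 - Real.exp (-2 * α * t)) / (2 * α)
        - 2 / α * (1 - Real.exp (-α * t))) atTop
      (nhds ((1 - 0) / (2 * α) - 2 / α * (1 - 0))) :=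
    ((tendsto_const_nhds.sub he2).div_const _).sub
      ((tendsto_const_nhds.sub he1).const_mul _)
  constructor
  · rintro ⟨l, hl⟩
    have hSpos : 0 < S := by
      rw [hS]
      refine Finset.sum_pos' (fun i _ => by positivity) ⟨l, Finset.mem_univ l, ?_⟩
      exact mul_pos (pow_pos (hσx l) 2) (pow_two_pos_of_ne_zero hl)
    have hdiv : Tendsto (fun t => Vy t / t) atTop (nhds S) := by
      have h1 : Tendsto (fun t : ℝ =>
          (1 - Real.exp (-2 * α * t)) / (2 * α) * σy ^ 2 / t) atTop (nhds 0) :=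
        hA.div_atTop tendsto_id
      have h2 : Tendsto (fun t : ℝ =>
          (1 + ((1 - Real.exp (-2 * α * t)) / (2 * α)
            - 2 / α * (1 - Real.exp (-α * t))) / t) * S) atTop
          (nhds ((1 + 0) * S)) :=
        (tendsto_const_nhds.add (hg.div_atTop tendsto_id)).mul_const S
      have h3 := h1.add h2
      have h4 : Tendsto (fun t => Vy t / t) atTop (nhds (0 + (1 + 0) * S)) := by
        apply h3.congr'
        filter_upwards [eventually_gt_atTop (0:ℝ)] with t ht
        rw [hVy t]
        have htne : t ≠ 0 := ht.ne'
        field_simp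
        ring
      simpa using h4
    refine ⟨hSpos, hdiv, ?_⟩
    have hmul : Tendsto (fun t : ℝ => Vy t / t * t) atTop atTop :=
      Tendsto.pos_mul_atTop hSpos hdiv tendsto_id
    apply hmul.congr'
    filter_upwards [eventually_gt_atTop (0:ℝ)] with t ht
    field_simp
  · intro hb
    have hS0 : S = 0 := by
      rw [hS]
      apply Finset.sum_eq_zero
      intro l _
      simp [hb l]
    have : Tendsto Vy atTop (nhds ((1 - 0) / (2 * α) * σy ^ 2)) := by
      apply hA.congr'
      filter_upwards with t
      rw [hVy t, hS0]
      ring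
    have heq : (1 - 0) / (2 * α) * σy ^ 2 = σy ^ 2 / (2 * α) := by ring
    rwa [heq] at this
end
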